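/- Let F = (f₁,…,fₙ) : ℝⁿ → ℝⁿ be a polynomial map and let a, b be real polynomials in the variables x₁,…,xₙ. Define Φ : ℝⁿ × ℝ × ℝ → ℝⁿ × ℝ × ℝ by Φ(x,y,z) = (f₁(x) − (y + a(x))(z + b(x)), f₂(x), …, fₙ(x), y + a(x), z + b(x)). Then j(Φ)(x,y,z) = j(F)(x) for all (x,y,z), and Φ is injective if and only if F is injective, surjective if and only if F is surjective, and bijective if and only if F is bijective. -/

import Mathlib

/-!
With `g x = (a x, b x)` and `h (s, t) = -Pi.single 0 (s * t)`, the map factors as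
`Φ = shearFst h ∘ Prod.map F id ∘ shearSnd g`. Both shears are bijections, and their derivatives
are block unitriangular, so their Jacobian determinants are `1`. Hence `Φ` is injective, surjective
or bijective exactly when `Prod.map F id` is, i.e. when `F` is, and the chain rule gives
`j(Φ)(x, y, z) = j(F)(x)`.
-/

noncomputable section

def IsPolynomialMap {ι κ : Type*} (F : (ι → ℝ) → (κ → ℝ)) : Prop :=
  ∃ p : κ → MvPolynomial ι ℝ, ∀ x i, F x i = MvPolynomial.eval x (p i)

/-- The Jacobian determinant j(F)(p) = det J(F)(p) of a map at a point. -/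
def jdet {E : Type*} [NormedAddCommGroup E] [NormedSpace ℝ E] (F : E → E) (p : E) : ℝ :=
  LinearMap.det (fderiv ℝ F p : E →ₗ[ℝ] E)

open Function

theorem MvPolynomial.differentiable_eval {ι : Type*} [Fintype ι] (p : MvPolynomial ι ℝ) :
    Differentiable ℝ fun x : ι → ℝ => MvPolynomial.eval x p :=
  fun x => (AnalyticOnNhd.eval_mvPolynomial p x (Set.mem_univ x)).differentiableAt

theorem IsPolynomialMap.differentiable {ι κ : Type*} [Fintype ι] [Fintype κ]
    {F : (ι → ℝ) → (κ → ℝ)} (hF : IsPolynomialMap F) : Differentiable ℝ F := by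
  obtain ⟨p, hp⟩ := hF
  have hF : F = fun x i => MvPolynomial.eval x (p i) := funext fun x => funext (hp x)
  exact hF ▸ differentiable_pi.2 fun i => (p i).differentiable_eval

theorem Function.update_apply_sub_eq_sub_single {ι G : Type*} [DecidableEq ι] [AddCommGroup G]
    (v : ι → G) (i : ι) (c : G) : update v i (v i - c) = v - Pi.single i c := by
  rw [Pi.update_eq_sub_add_single, Pi.single_sub]
  abel

section Shear

variable {E F : Type*}

@[simps]
def shearFst [AddGroup E] (h : F → E) : E × F ≃ E × F where
  toFun p := (p.1 + h p.2, p.2)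
  invFun p := (p.1 - h p.2, p.2)
  left_inv p := by simp
  right_inv p := by simp

@[simps]
def shearSnd [AddGroup F] (g : E → F) : E × F ≃ E × F where
  toFun p := (p.1, p.2 + g p.1)
  invFun p := (p.1, p.2 - g p.1)
  left_inv p := by simp
  right_inv p := by simp

variable {R : Type*} [Field R] [AddCommGroup E] [Module R E] [AddCommGroup F] [Module R F]
  [FiniteDimensional R E] [FiniteDimensional R F]

namespace LinearMap

theorem det_id_add_inl_comp_snd (C : F →ₗ[R] E) :
    LinearMap.det (id + inl R E F ∘ₗ C ∘ₗ snd R E F) = 1 := by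
  set bE := Module.finBasis R E
  set bF := Module.finBasis R F
  have : toMatrix (bE.prod bF) (bE.prod bF) (id + inl R E F ∘ₗ C ∘ₗ snd R E F) =
      Matrix.fromBlocks 1 (toMatrix bF bE C) 0 1 := by
    ext (i|i) (j|j) <;>
      simp [toMatrix_apply, Matrix.fromBlocks, Matrix.one_apply, Finsupp.single_apply, eq_comm]
  rw [← det_toMatrix (bE.prod bF), this, Matrix.det_fromBlocks_zero₂₁]
  simp

theorem det_id_add_inr_comp_fst (C : E →ₗ[R] F) :
    LinearMap.det (id + inr R E F ∘ₗ C ∘ₗ fst R E F) = 1 := by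
  set bE := Module.finBasis R E
  set bF := Module.finBasis R F
  have : toMatrix (bE.prod bF) (bE.prod bF) (id + inr R E F ∘ₗ C ∘ₗ fst R E F) =
      Matrix.fromBlocks 1 0 (toMatrix bE bF C) 1 := by
    ext (i|i) (j|j) <;>
      simp [toMatrix_apply, Matrix.fromBlocks, Matrix.one_apply, Finsupp.single_apply, eq_comm]
  rw [← det_toMatrix (bE.prod bF), this, Matrix.det_fromBlocks_zero₁₂]
  simp

end LinearMap

end Shear

section Jacobian

variable {E F : Type*} [NormedAddCommGroup E] [NormedSpace ℝ E] [NormedAddCommGroup F]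
  [NormedSpace ℝ F]

theorem jdet_comp {f g : E → E} {p : E} (hf : DifferentiableAt ℝ f (g p))
    (hg : DifferentiableAt ℝ g p) : jdet (f ∘ g) p = jdet f (g p) * jdet g p := by
  rw [jdet, fderiv_comp p hf hg, ContinuousLinearMap.toLinearMap_comp, LinearMap.det_comp, jdet,
    jdet]

theorem jdet_id (p : E) : jdet id p = 1 := by
  simp [jdet]

theorem hasFDerivAt_shearFst {h : F → E} {p : E × F} (hh : DifferentiableAt ℝ h p.2) :
    HasFDerivAt (shearFst h)
      ((ContinuousLinearMap.fst ℝ E F + (fderiv ℝ h p.2).comp (ContinuousLinearMap.snd ℝ E F)).prod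
        (ContinuousLinearMap.snd ℝ E F)) p :=
  (hasFDerivAt_fst.add (hh.hasFDerivAt.comp p hasFDerivAt_snd)).prodMk hasFDerivAt_snd

theorem hasFDerivAt_shearSnd {g : E → F} {p : E × F} (hg : DifferentiableAt ℝ g p.1) :
    HasFDerivAt (shearSnd g)
      ((ContinuousLinearMap.fst ℝ E F).prod
        (ContinuousLinearMap.snd ℝ E F + (fderiv ℝ g p.1).comp (ContinuousLinearMap.fst ℝ E F))) p :=
  hasFDerivAt_fst.prodMk (hasFDerivAt_snd.add (hg.hasFDerivAt.comp p hasFDerivAt_fst))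

variable [FiniteDimensional ℝ E] [FiniteDimensional ℝ F]

theorem jdet_prodMap {f : E → E} {g : F → F} {p : E × F} (hf : DifferentiableAt ℝ f p.1)
    (hg : DifferentiableAt ℝ g p.2) : jdet (Prod.map f g) p = jdet f p.1 * jdet g p.2 := by
  rw [jdet, (hf.hasFDerivAt.prodMap p hg.hasFDerivAt).fderiv, ContinuousLinearMap.coe_prodMap,
    LinearMap.det_prodMap, jdet, jdet]

theorem jdet_shearFst {h : F → E} {p : E × F} (hh : DifferentiableAt ℝ h p.2) :
    jdet (shearFst h) p = 1 := by
  rw [jdet, (hasFDerivAt_shearFst hh).fderiv]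
  convert LinearMap.det_id_add_inl_comp_snd (fderiv ℝ h p.2 : F →ₗ[ℝ] E)
  ext <;> simp

theorem jdet_shearSnd {g : E → F} {p : E × F} (hg : DifferentiableAt ℝ g p.1) :
    jdet (shearSnd g) p = 1 := by
  rw [jdet, (hasFDerivAt_shearSnd hg).fderiv]
  convert LinearMap.det_id_add_inr_comp_fst (fderiv ℝ g p.1 : E →ₗ[ℝ] F)
  ext <;> simp

end Jacobian

/-- let F = (f₁,…,fₙ) : ℝⁿ → ℝⁿ be a polynomial map, a, b real
polynomials in x₁,…,xₙ, and Φ : ℝⁿ × ℝ × ℝ → ℝⁿ × ℝ × ℝ the map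
Φ(x,y,z) = (f₁(x) − (y + a(x))(z + b(x)), f₂(x), …, fₙ(x), y + a(x), z + b(x)).
Then j(Φ) = j(F) ∘ (projection to x), and Φ is injective/surjective/bijective iff
F is. -/
theorem stmt16 (n : ℕ) (hn : 0 < n)
    (F : (Fin n → ℝ) → (Fin n → ℝ)) (hF : IsPolynomialMap F)
    (a b : MvPolynomial (Fin n) ℝ)
    (Φ : (Fin n → ℝ) × ℝ × ℝ → (Fin n → ℝ) × ℝ × ℝ)
    (hΦ : ∀ (x : Fin n → ℝ) (y z : ℝ),
      Φ (x, y, z) =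
        (Function.update (F x) ⟨0, hn⟩
            (F x ⟨0, hn⟩ - (y + MvPolynomial.eval x a) * (z + MvPolynomial.eval x b)),
          y + MvPolynomial.eval x a, z + MvPolynomial.eval x b)) :
    (∀ Q : (Fin n → ℝ) × ℝ × ℝ, jdet Φ Q = jdet F Q.1) ∧
    (Function.Injective Φ ↔ Function.Injective F) ∧
    (Function.Surjective Φ ↔ Function.Surjective F) ∧
    (Function.Bijective Φ ↔ Function.Bijective F) := by
  set g : (Fin n → ℝ) → ℝ × ℝ := fun x => (MvPolynomial.eval x a, MvPolynomial.eval x b)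
  set h : ℝ × ℝ → (Fin n → ℝ) := fun w => -Pi.single ⟨0, hn⟩ (w.1 * w.2)
  have hdecomp : Φ = shearFst h ∘ Prod.map F id ∘ shearSnd g := by
    funext ⟨x, y, z⟩
    rw [hΦ, update_apply_sub_eq_sub_single, sub_eq_add_neg]
    rfl
  have hFd : Differentiable ℝ F := hF.differentiable
  have hgd : Differentiable ℝ g := a.differentiable_eval.prodMk b.differentiable_eval
  have hhd : Differentiable ℝ h :=
    ((ContinuousLinearMap.single ℝ (fun _ => ℝ) _).differentiable.comp
      (differentiable_fst.mul differentiable_snd)).neg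
  refine ⟨fun Q => ?_, ?_, ?_, ?_⟩
  · have hS : DifferentiableAt ℝ (shearSnd g) Q := (hasFDerivAt_shearSnd (hgd _)).differentiableAt
    have hFid : DifferentiableAt ℝ (Prod.map F id) (shearSnd g Q) :=
      (hFd _).prodMap _ differentiableAt_id
    rw [hdecomp, jdet_comp (hasFDerivAt_shearFst (hhd _)).differentiableAt (hFid.comp Q hS),
      jdet_comp hFid hS, jdet_shearFst (hhd _), jdet_prodMap (hFd _) differentiableAt_id, jdet_id,
      jdet_shearSnd (hgd _)]
    simp
  · rw [hdecomp, Equiv.comp_injective, Equiv.injective_comp, Prod.map_injective,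
      and_iff_left injective_id]
  · rw [hdecomp, Equiv.comp_surjective, Equiv.surjective_comp, Prod.map_surjective,
      and_iff_left surjective_id]
  · rw [hdecomp, Equiv.comp_bijective, Equiv.bijective_comp, Prod.map_bijective,
      and_iff_left bijective_id]
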